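/- arXiv:1612.00191 — 2 statements merged into one kernel-verified Lean document; each statement's English description precedes it below -/
import Mathlib

section
/- Fix an integer n ≥ 1 and let F_n = {([x₀:x₁:x₂],[u:v]) ∈ ℙ²(ℝ)×ℙ¹(ℝ) : uⁿx₂ = vⁿx₁} be the n-th real Hirzebruch surface, with the two disjoint sections E_n = {x₁ = x₂ = 0} and s_n = {x₀ = 0}. Let P ∈ ℝ[u,v] be a nonzero homogeneous polynomial of degree 2n, and define the partial self-map φ([x₀:x₁:x₂],[u:v]) = ([x₁·P(u,v) : x₀u^{2n} : x₀uⁿvⁿ], [u:v]), defined where the first coordinate triple is nonzero. Then: (i) φ maps points of F_n to points of F_n; (ii) for every q = ([x₀:x₁:x₂],[u:v]) ∈ F_n with u ≠ 0, P(u,v) ≠ 0 and (x₀,x₁) ≠ (0,0), both applications are defined and φ(φ(q)) = q; (iii) φ maps every point of s_n with u ≠ 0 and P(u,v) ≠ 0 to a point of E_n, and maps every point of E_n with u ≠ 0 to a point of s_n. -/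
/-!
On the chart `u ≠ 0` the surface `F_n` is cut out by `x₂ = (v/u)ⁿ x₁`, so a point is determined
by `[x₀ : x₁]` and `φ` acts as `[x₀ : x₁] ↦ [x₁ P : x₀ u^{2n}]`. Applying it twice multiplies
every coordinate by `u^{2n} P(u,v)`; the third coordinate also agrees because of the defining
relation `uⁿx₂ = vⁿx₁`. The image always satisfies that relation, and `φ` swaps `x₀ = 0` with
`x₁ = x₂ = 0`.
-/

/-- The real Hirzebruch surface
`F_n = {([x₀:x₁:x₂],[u:v]) ∈ ℙ²(ℝ) × ℙ¹(ℝ) : uⁿx₂ = vⁿx₁}`. -/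
def hirzebruchF (n : ℕ) :
    Set (Projectivization ℝ (Fin 3 → ℝ) × Projectivization ℝ (Fin 2 → ℝ)) :=
  {P | ∃ (x₀ x₁ x₂ u v : ℝ) (h1 : (![x₀, x₁, x₂] : Fin 3 → ℝ) ≠ 0)
      (h2 : (![u, v] : Fin 2 → ℝ) ≠ 0),
      P = (Projectivization.mk ℝ ![x₀, x₁, x₂] h1, Projectivization.mk ℝ ![u, v] h2) ∧
      u ^ n * x₂ = v ^ n * x₁}

/-- The exceptional section `E_n = {x₁ = x₂ = 0}` of `F_n`. -/
def sectionE : Set (Projectivization ℝ (Fin 3 → ℝ) × Projectivization ℝ (Fin 2 → ℝ)) :=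
  {P | ∃ (x₀ u v : ℝ) (h1 : (![x₀, 0, 0] : Fin 3 → ℝ) ≠ 0)
      (h2 : (![u, v] : Fin 2 → ℝ) ≠ 0),
      P = (Projectivization.mk ℝ ![x₀, 0, 0] h1, Projectivization.mk ℝ ![u, v] h2)}

/-- The section `s_n = {x₀ = 0}` of `F_n`, of self-intersection `n`. -/
def sectionS (n : ℕ) :
    Set (Projectivization ℝ (Fin 3 → ℝ) × Projectivization ℝ (Fin 2 → ℝ)) :=
  {P | ∃ (x₁ x₂ u v : ℝ) (h1 : (![0, x₁, x₂] : Fin 3 → ℝ) ≠ 0)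
      (h2 : (![u, v] : Fin 2 → ℝ) ≠ 0),
      P = (Projectivization.mk ℝ ![0, x₁, x₂] h1, Projectivization.mk ℝ ![u, v] h2) ∧
      u ^ n * x₂ = v ^ n * x₁}

/-- Evaluation of a polynomial `P ∈ ℝ[u,v]` at `(a,b)`. -/
noncomputable def evalP (P : MvPolynomial (Fin 2) ℝ) (a b : ℝ) : ℝ :=
  MvPolynomial.eval ![a, b] P

open Projectivization

-- The `ℙ²`-coordinates of `φ([x₀:x₁:x₂],[u:v])`; they do not involve `x₂`.
noncomputable def phiVec (P : MvPolynomial (Fin 2) ℝ) (n : ℕ) (x₀ x₁ u v : ℝ) : Fin 3 → ℝ :=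
  ![x₁ * evalP P u v, x₀ * u ^ (2 * n), x₀ * (u ^ n * v ^ n)]

section

variable {P : MvPolynomial (Fin 2) ℝ} {n : ℕ} {x₀ x₁ x₂ u v : ℝ}

theorem mk_mem_hirzebruchF_iff (h1 : (![x₀, x₁, x₂] : Fin 3 → ℝ) ≠ 0)
    (h2 : (![u, v] : Fin 2 → ℝ) ≠ 0) :
    (mk ℝ ![x₀, x₁, x₂] h1, mk ℝ ![u, v] h2) ∈ hirzebruchF n ↔ u ^ n * x₂ = v ^ n * x₁ := by
  refine ⟨fun ⟨y₀, y₁, y₂, u', v', g1, g2, heq, hrel⟩ => ?_,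
    fun h => ⟨_, _, _, _, _, h1, h2, rfl, h⟩⟩
  obtain ⟨hx, hu⟩ := Prod.ext_iff.mp heq
  obtain ⟨a, ha⟩ := (mk_eq_mk_iff' ℝ _ _ _ _).mp hx
  obtain ⟨b, hb⟩ := (mk_eq_mk_iff' ℝ _ _ _ _).mp hu
  obtain rfl : x₁ = a * y₁ := (congrFun ha 1).symm
  obtain rfl : x₂ = a * y₂ := (congrFun ha 2).symm
  obtain rfl : u = b * u' := (congrFun hb 0).symm
  obtain rfl : v = b * v' := (congrFun hb 1).symm
  linear_combination a * b ^ n * hrel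

theorem mk_mem_sectionE {w : Fin 3 → ℝ} (hw : w ≠ 0) (h2 : (![u, v] : Fin 2 → ℝ) ≠ 0)
    (hw₁ : w 1 = 0) (hw₂ : w 2 = 0) : (mk ℝ w hw, mk ℝ ![u, v] h2) ∈ sectionE := by
  obtain ⟨a, rfl⟩ : ∃ a, w = ![a, 0, 0] := ⟨w 0, by ext i; fin_cases i <;> simp [hw₁, hw₂]⟩
  exact ⟨a, u, v, hw, h2, rfl⟩

theorem mk_mem_sectionS {w : Fin 3 → ℝ} (hw : w ≠ 0) (h2 : (![u, v] : Fin 2 → ℝ) ≠ 0)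
    (hw₀ : w 0 = 0) (hrel : u ^ n * w 2 = v ^ n * w 1) :
    (mk ℝ w hw, mk ℝ ![u, v] h2) ∈ sectionS n := by
  obtain ⟨a, b, rfl⟩ : ∃ a b, w = ![0, a, b] :=
    ⟨w 1, w 2, by ext i; fin_cases i <;> simp [hw₀]⟩
  exact ⟨a, b, u, v, hw, h2, rfl, hrel⟩

theorem phiVec_ne_zero (h : x₁ * evalP P u v ≠ 0 ∨ x₀ * u ^ (2 * n) ≠ 0) :
    phiVec P n x₀ x₁ u v ≠ 0 :=
  fun hz => h.elim (· (congrFun hz 0)) (· (congrFun hz 1))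

theorem phiVec_rel (P : MvPolynomial (Fin 2) ℝ) (n : ℕ) (x₀ x₁ u v : ℝ) :
    u ^ n * phiVec P n x₀ x₁ u v 2 = v ^ n * phiVec P n x₀ x₁ u v 1 := by
  simp only [phiVec, Matrix.cons_val]
  ring

theorem phiVec_phiVec (hrel : u ^ n * x₂ = v ^ n * x₁) :
    phiVec P n (x₁ * evalP P u v) (x₀ * u ^ (2 * n)) u v =
      (u ^ (2 * n) * evalP P u v) • ![x₀, x₁, x₂] := by
  ext i
  fin_cases i <;> simp only [phiVec, Fin.reduceFinMk, Matrix.cons_val, Pi.smul_apply, smul_eq_mul]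
  · ring
  · ring
  · linear_combination -evalP P u v * u ^ n * hrel

end

theorem stmt_9_general (n : ℕ) (P : MvPolynomial (Fin 2) ℝ) :
    -- (i)
    (∀ (x₀ x₁ x₂ u v : ℝ) (h1 : (![x₀, x₁, x₂] : Fin 3 → ℝ) ≠ 0)
        (h2 : (![u, v] : Fin 2 → ℝ) ≠ 0)
        (h3 : (![x₁ * evalP P u v, x₀ * u ^ (2 * n), x₀ * (u ^ n * v ^ n)] :
          Fin 3 → ℝ) ≠ 0),
      (Projectivization.mk ℝ ![x₀, x₁, x₂] h1, Projectivization.mk ℝ ![u, v] h2) ∈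
        hirzebruchF n →
      (Projectivization.mk ℝ ![x₁ * evalP P u v, x₀ * u ^ (2 * n), x₀ * (u ^ n * v ^ n)] h3,
        Projectivization.mk ℝ ![u, v] h2) ∈ hirzebruchF n) ∧
    -- (ii)
    (∀ (x₀ x₁ x₂ u v : ℝ) (h1 : (![x₀, x₁, x₂] : Fin 3 → ℝ) ≠ 0)
        (h2 : (![u, v] : Fin 2 → ℝ) ≠ 0),
      (Projectivization.mk ℝ ![x₀, x₁, x₂] h1, Projectivization.mk ℝ ![u, v] h2) ∈
        hirzebruchF n →
      u ≠ 0 → evalP P u v ≠ 0 → ¬(x₀ = 0 ∧ x₁ = 0) →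
      (![x₁ * evalP P u v, x₀ * u ^ (2 * n), x₀ * (u ^ n * v ^ n)] : Fin 3 → ℝ) ≠ 0 ∧
      (![(x₀ * u ^ (2 * n)) * evalP P u v, (x₁ * evalP P u v) * u ^ (2 * n),
        (x₁ * evalP P u v) * (u ^ n * v ^ n)] : Fin 3 → ℝ) ≠ 0 ∧
      ∀ hk : (![(x₀ * u ^ (2 * n)) * evalP P u v, (x₁ * evalP P u v) * u ^ (2 * n),
          (x₁ * evalP P u v) * (u ^ n * v ^ n)] : Fin 3 → ℝ) ≠ 0,
        Projectivization.mk ℝ ![(x₀ * u ^ (2 * n)) * evalP P u v,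
            (x₁ * evalP P u v) * u ^ (2 * n), (x₁ * evalP P u v) * (u ^ n * v ^ n)] hk =
          Projectivization.mk ℝ ![x₀, x₁, x₂] h1) ∧
    -- (iii) s_n goes to E_n
    (∀ (x₁ x₂ u v : ℝ) (h1 : (![0, x₁, x₂] : Fin 3 → ℝ) ≠ 0)
        (h2 : (![u, v] : Fin 2 → ℝ) ≠ 0),
      u ^ n * x₂ = v ^ n * x₁ → u ≠ 0 → evalP P u v ≠ 0 →
      ∃ h3 : (![x₁ * evalP P u v, 0 * u ^ (2 * n), 0 * (u ^ n * v ^ n)] : Fin 3 → ℝ) ≠ 0,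
        (Projectivization.mk ℝ
            ![x₁ * evalP P u v, 0 * u ^ (2 * n), 0 * (u ^ n * v ^ n)] h3,
          Projectivization.mk ℝ ![u, v] h2) ∈ sectionE) ∧
    -- (iii) E_n goes to s_n
    (∀ (x₀ u v : ℝ) (h1 : (![x₀, 0, 0] : Fin 3 → ℝ) ≠ 0)
        (h2 : (![u, v] : Fin 2 → ℝ) ≠ 0),
      u ≠ 0 →
      ∃ h3 : (![0 * evalP P u v, x₀ * u ^ (2 * n), x₀ * (u ^ n * v ^ n)] : Fin 3 → ℝ) ≠ 0,
        (Projectivization.mk ℝ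
            ![0 * evalP P u v, x₀ * u ^ (2 * n), x₀ * (u ^ n * v ^ n)] h3,
          Projectivization.mk ℝ ![u, v] h2) ∈ sectionS n) := by
  refine ⟨?_, ?_, ?_, ?_⟩
  · intro x₀ x₁ x₂ u v _ h2 h3 _
    exact (mk_mem_hirzebruchF_iff h3 h2).mpr (phiVec_rel P n x₀ x₁ u v)
  · intro x₀ x₁ x₂ u v h1 h2 hmem hu hPv hx
    have hu' : u ^ (2 * n) ≠ 0 := pow_ne_zero _ hu
    have hx' : x₁ ≠ 0 ∨ x₀ ≠ 0 := by tauto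
    refine ⟨phiVec_ne_zero (hx'.imp (mul_ne_zero · hPv) (mul_ne_zero · hu')),
      phiVec_ne_zero (hx'.symm.imp (fun h => mul_ne_zero (mul_ne_zero h hu') hPv)
        (fun h => mul_ne_zero (mul_ne_zero h hPv) hu')), fun hk => ?_⟩
    have hrel := (mk_mem_hirzebruchF_iff h1 h2).mp hmem
    exact (mk_eq_mk_iff' ℝ _ _ hk h1).mpr ⟨_, (phiVec_phiVec hrel).symm⟩
  · intro x₁ x₂ u v h1 h2 hrel hu hPv
    have hx₁ : x₁ ≠ 0 := by
      rintro rfl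
      have hx₂ : x₂ = 0 := by simpa [hu] using hrel
      exact h1 (by simp [hx₂])
    have h3 := phiVec_ne_zero (P := P) (n := n) (x₀ := 0) (Or.inl (mul_ne_zero hx₁ hPv))
    exact ⟨h3, mk_mem_sectionE h3 h2 (zero_mul _) (zero_mul _)⟩
  · intro x₀ u v h1 h2 hu
    have hx₀ : x₀ ≠ 0 := fun h => h1 (by simp [h])
    have h3 := phiVec_ne_zero (P := P) (x₁ := 0) (v := v)
      (Or.inr (mul_ne_zero hx₀ (pow_ne_zero (2 * n) hu)))
    exact ⟨h3, mk_mem_sectionS h3 h2 (zero_mul _) (phiVec_rel P n x₀ 0 u v)⟩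

/-- For `n ≥ 1` and a nonzero homogeneous `P` of degree `2n`, the partial self-map
`φ([x₀:x₁:x₂],[u:v]) = ([x₁·P(u,v) : x₀u^{2n} : x₀uⁿvⁿ], [u:v])` of `ℙ² × ℙ¹` satisfies:
(i) it maps points of `F_n` to points of `F_n`;
(ii) for every point of `F_n` with `u ≠ 0`, `P(u,v) ≠ 0` and `(x₀,x₁) ≠ (0,0)`, both
applications are defined and `φ(φ(q)) = q`;
(iii) it maps points of `s_n` with `u ≠ 0`, `P(u,v) ≠ 0` to points of `E_n`, and points of
`E_n` with `u ≠ 0` to points of `s_n`. -/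
theorem stmt_9 (n : ℕ) (hn : 1 ≤ n) (P : MvPolynomial (Fin 2) ℝ) (hP : P ≠ 0)
    (hhom : P.IsHomogeneous (2 * n)) :
    -- (i)
    (∀ (x₀ x₁ x₂ u v : ℝ) (h1 : (![x₀, x₁, x₂] : Fin 3 → ℝ) ≠ 0)
        (h2 : (![u, v] : Fin 2 → ℝ) ≠ 0)
        (h3 : (![x₁ * evalP P u v, x₀ * u ^ (2 * n), x₀ * (u ^ n * v ^ n)] :
          Fin 3 → ℝ) ≠ 0),
      (Projectivization.mk ℝ ![x₀, x₁, x₂] h1, Projectivization.mk ℝ ![u, v] h2) ∈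
        hirzebruchF n →
      (Projectivization.mk ℝ ![x₁ * evalP P u v, x₀ * u ^ (2 * n), x₀ * (u ^ n * v ^ n)] h3,
        Projectivization.mk ℝ ![u, v] h2) ∈ hirzebruchF n) ∧
    -- (ii)
    (∀ (x₀ x₁ x₂ u v : ℝ) (h1 : (![x₀, x₁, x₂] : Fin 3 → ℝ) ≠ 0)
        (h2 : (![u, v] : Fin 2 → ℝ) ≠ 0),
      (Projectivization.mk ℝ ![x₀, x₁, x₂] h1, Projectivization.mk ℝ ![u, v] h2) ∈
        hirzebruchF n →
      u ≠ 0 → evalP P u v ≠ 0 → ¬(x₀ = 0 ∧ x₁ = 0) →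
      (![x₁ * evalP P u v, x₀ * u ^ (2 * n), x₀ * (u ^ n * v ^ n)] : Fin 3 → ℝ) ≠ 0 ∧
      (![(x₀ * u ^ (2 * n)) * evalP P u v, (x₁ * evalP P u v) * u ^ (2 * n),
        (x₁ * evalP P u v) * (u ^ n * v ^ n)] : Fin 3 → ℝ) ≠ 0 ∧
      ∀ hk : (![(x₀ * u ^ (2 * n)) * evalP P u v, (x₁ * evalP P u v) * u ^ (2 * n),
          (x₁ * evalP P u v) * (u ^ n * v ^ n)] : Fin 3 → ℝ) ≠ 0,
        Projectivization.mk ℝ ![(x₀ * u ^ (2 * n)) * evalP P u v,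
            (x₁ * evalP P u v) * u ^ (2 * n), (x₁ * evalP P u v) * (u ^ n * v ^ n)] hk =
          Projectivization.mk ℝ ![x₀, x₁, x₂] h1) ∧
    -- (iii) s_n goes to E_n
    (∀ (x₁ x₂ u v : ℝ) (h1 : (![0, x₁, x₂] : Fin 3 → ℝ) ≠ 0)
        (h2 : (![u, v] : Fin 2 → ℝ) ≠ 0),
      u ^ n * x₂ = v ^ n * x₁ → u ≠ 0 → evalP P u v ≠ 0 →
      ∃ h3 : (![x₁ * evalP P u v, 0 * u ^ (2 * n), 0 * (u ^ n * v ^ n)] : Fin 3 → ℝ) ≠ 0,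
        (Projectivization.mk ℝ
            ![x₁ * evalP P u v, 0 * u ^ (2 * n), 0 * (u ^ n * v ^ n)] h3,
          Projectivization.mk ℝ ![u, v] h2) ∈ sectionE) ∧
    -- (iii) E_n goes to s_n
    (∀ (x₀ u v : ℝ) (h1 : (![x₀, 0, 0] : Fin 3 → ℝ) ≠ 0)
        (h2 : (![u, v] : Fin 2 → ℝ) ≠ 0),
      u ≠ 0 →
      ∃ h3 : (![0 * evalP P u v, x₀ * u ^ (2 * n), x₀ * (u ^ n * v ^ n)] : Fin 3 → ℝ) ≠ 0,
        (Projectivization.mk ℝ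
            ![0 * evalP P u v, x₀ * u ^ (2 * n), x₀ * (u ^ n * v ^ n)] h3,
          Projectivization.mk ℝ ![u, v] h2) ∈ sectionS n) :=
  stmt_9_general n P
end

section
/- Let Z₂ = {([w:x:y:z],[u:v]) ∈ ℙ³(ℂ)×ℙ¹(ℂ) : wz = x²+y², uz = vw}, let π: Z₂ → ℙ¹ be the projection ([w:x:y:z],[u:v]) ↦ [u:v], and let Z₂(ℝ) be the set of points admitting a representative with all coordinates real. Then π(Z₂(ℝ)) = {[t:1] : t ∈ ℝ, t ≥ 0} ∪ {[1:0]} ⊂ ℙ¹(ℝ); that is, a point [u:v] ∈ ℙ¹(ℝ) is the image of a real point of Z₂ if and only if uv ≥ 0. -/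
/-!
The equations of `Z₂` are homogeneous in `[w:x:y:z]` and in `[u:v]`, so a real point satisfies
them on its real representative. There, if `z ≠ 0` then `uv z² = v² (x² + y²) ≥ 0`, and if
`z = 0` then `x = y = 0`, so `w ≠ 0` and `v = 0`. Conversely `[u : √(uv) : 0 : v]` lies over
`[u : v]` whenever `uv ≥ 0`. The sign of `uv` depends only on the real point `[u:v]`, because
`uv (u'² + v'²) = (u² + v²) u'v'` whenever `uv' = vu'`.
-/

/-- The surface `Z₂ = {([w:x:y:z],[u:v]) ∈ ℙ³(ℂ) × ℙ¹(ℂ) : wz = x² + y², uz = vw}`. -/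
def Z2C : Set (Projectivization ℂ (Fin 4 → ℂ) × Projectivization ℂ (Fin 2 → ℂ)) :=
  {P | ∃ (w x y z u v : ℂ) (h1 : (![w, x, y, z] : Fin 4 → ℂ) ≠ 0)
      (h2 : (![u, v] : Fin 2 → ℂ) ≠ 0),
      P = (Projectivization.mk ℂ ![w, x, y, z] h1, Projectivization.mk ℂ ![u, v] h2) ∧
      w * z = x ^ 2 + y ^ 2 ∧ u * z = v * w}

/-- The real points `Z₂(ℝ)` of `Z₂`: the points admitting a representative with all
coordinates real. -/
def Z2Real : Set (Projectivization ℂ (Fin 4 → ℂ) × Projectivization ℂ (Fin 2 → ℂ)) :=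
  {P | P ∈ Z2C ∧ ∃ (w x y z u v : ℝ) (h1 : (![(w : ℂ), x, y, z] : Fin 4 → ℂ) ≠ 0)
      (h2 : (![(u : ℂ), (v : ℂ)] : Fin 2 → ℂ) ≠ 0),
      P = (Projectivization.mk ℂ ![(w : ℂ), x, y, z] h1,
        Projectivization.mk ℂ ![(u : ℂ), (v : ℂ)] h2)}

namespace Projectivization

variable {K V : Type*} [DivisionRing K] [AddCommGroup V] [Module K V]

theorem map_eq_zero_of_mk_eq_mk {F : V → K} {k : ℕ} (hF : ∀ (c : K) v, F (c • v) = c ^ k * F v)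
    {v w : V} {hv : v ≠ 0} {hw : w ≠ 0} (h : mk K v hv = mk K w hw) (hFv : F v = 0) :
    F w = 0 := by
  obtain ⟨a, rfl⟩ := (mk_eq_mk_iff K _ _ hv hw).1 h
  rw [Units.smul_def, hF] at hFv
  exact (mul_eq_zero.1 hFv).resolve_left (pow_ne_zero k a.ne_zero)

theorem mk_fin_two_eq_mk_iff {K : Type*} [Field K] {a b c d : K} (hab : ![a, b] ≠ 0)
    (hcd : ![c, d] ≠ 0) : mk K ![a, b] hab = mk K ![c, d] hcd ↔ a * d = b * c := by
  constructor
  · intro h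
    have := map_eq_zero_of_mk_eq_mk (F := fun p : Fin 2 → K => p 0 * d - p 1 * c) (k := 1)
      (fun e p => by simp only [Pi.smul_apply, smul_eq_mul]; ring) h.symm (sub_eq_zero.2 (mul_comm c d))
    simpa [sub_eq_zero] using this
  · intro h
    rw [mk_eq_mk_iff']
    by_cases hc : c = 0
    · have hd : d ≠ 0 := fun hd => hcd (by simp [hc, hd])
      refine ⟨b / d, ?_⟩
      have ha : a = 0 := by simpa [hc, hd] using h
      ext i; fin_cases i <;> simp [ha, hc, hd]
    · refine ⟨a / c, ?_⟩
      ext i; fin_cases i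
      · exact div_mul_cancel₀ a hc
      · show a / c * d = b
        field_simp
        linear_combination h

end Projectivization

open Projectivization

theorem mk_mem_Z2C_iff {w x y z u v : ℂ} (h1 : ![w, x, y, z] ≠ 0) (h2 : ![u, v] ≠ 0) :
    (mk ℂ ![w, x, y, z] h1, mk ℂ ![u, v] h2) ∈ Z2C ↔ w * z = x ^ 2 + y ^ 2 ∧ u * z = v * w := by
  refine ⟨?_, fun ⟨hq, hb⟩ => ⟨w, x, y, z, u, v, h1, h2, rfl, hq, hb⟩⟩
  rintro ⟨W, X, Y, Z, U, V, H1, H2, hP, hq, hb⟩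
  obtain ⟨hp4, hp2⟩ := Prod.ext_iff.1 hP
  have hq' := map_eq_zero_of_mk_eq_mk
    (F := fun p : Fin 4 → ℂ => p 0 * p 3 - (p 1 ^ 2 + p 2 ^ 2)) (k := 2)
    (fun c p => by simp only [Pi.smul_apply, smul_eq_mul]; ring) hp4.symm (by simp [hq])
  -- `u z - v w` is bihomogeneous, so move one factor at a time
  have hb' := map_eq_zero_of_mk_eq_mk
    (F := fun p : Fin 4 → ℂ => U * p 3 - V * p 0) (k := 1)
    (fun c p => by simp only [Pi.smul_apply, smul_eq_mul]; ring) hp4.symm (by simp [hb])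
  have hb'' := map_eq_zero_of_mk_eq_mk
    (F := fun q : Fin 2 → ℂ => q 0 * z - q 1 * w) (k := 1)
    (fun c p => by simp only [Pi.smul_apply, smul_eq_mul]; ring) hp2.symm (by simpa using hb')
  simp only [sub_eq_zero] at hq' hb''
  simpa using ⟨hq', hb''⟩

theorem ofReal_mk_mem_Z2C_iff {w x y z u v : ℝ} (h1 : ![(w : ℂ), x, y, z] ≠ 0)
    (h2 : ![(u : ℂ), (v : ℂ)] ≠ 0) :
    (mk ℂ ![(w : ℂ), x, y, z] h1, mk ℂ ![(u : ℂ), (v : ℂ)] h2) ∈ Z2C ↔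
      w * z = x ^ 2 + y ^ 2 ∧ u * z = v * w := by
  rw [mk_mem_Z2C_iff]
  norm_cast

theorem mul_nonneg_of_mul_eq_sq_add_sq {w x y z u v : ℝ}
    (hwxyz : ¬(w = 0 ∧ x = 0 ∧ y = 0 ∧ z = 0)) (hq : w * z = x ^ 2 + y ^ 2)
    (hb : u * z = v * w) : 0 ≤ u * v := by
  by_cases hz : z = 0
  · have hw : w ≠ 0 := fun hw => hwxyz ⟨hw, by nlinarith, by nlinarith, hz⟩
    have hv : v = 0 := by simpa [hz, hw] using hb
    simp [hv]
  · have key : u * v * z ^ 2 = v ^ 2 * (x ^ 2 + y ^ 2) := by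
      linear_combination v * z * hb + v ^ 2 * hq
    have : 0 ≤ u * v * z ^ 2 := by rw [key]; positivity
    exact nonneg_of_mul_nonneg_left this (by positivity)

theorem mul_nonneg_of_mul_eq_mul {u v u' v' : ℝ} (huv' : ¬(u' = 0 ∧ v' = 0))
    (h : u * v' = v * u') (hnn : 0 ≤ u' * v') : 0 ≤ u * v := by
  have key : u * v * (u' ^ 2 + v' ^ 2) = (u ^ 2 + v ^ 2) * (u' * v') := by
    linear_combination (v * v' - u * u') * h
  have hpos : 0 < u' ^ 2 + v' ^ 2 := by
    by_contra! hle
    exact huv' ⟨by nlinarith, by nlinarith⟩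
  exact nonneg_of_mul_nonneg_left (key ▸ by positivity) hpos

theorem exists_mem_Z2Real_iff (u v : ℝ) (h2 : ![(u : ℂ), (v : ℂ)] ≠ 0) :
    (∃ q, (q, mk ℂ ![(u : ℂ), (v : ℂ)] h2) ∈ Z2Real) ↔ 0 ≤ u * v := by
  constructor
  · rintro ⟨q, hZ, w', x', y', z', u', v', h1', h2', hP⟩
    rw [hP] at hZ
    obtain ⟨hq, hb⟩ := (ofReal_mk_mem_Z2C_iff h1' h2').1 hZ
    have hcross := (mk_fin_two_eq_mk_iff h2 h2').1 (Prod.ext_iff.1 hP).2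
    norm_cast at hcross
    simp only [ne_eq, Matrix.cons_eq_zero_iff, Complex.ofReal_eq_zero, Matrix.zero_empty,
      and_true] at h1' h2'
    exact mul_nonneg_of_mul_eq_mul h2' hcross (mul_nonneg_of_mul_eq_sq_add_sq h1' hq hb)
  · intro huv
    have h1 : ![(u : ℂ), ((√(u * v) : ℝ) : ℂ), ((0 : ℝ) : ℂ), (v : ℂ)] ≠ 0 := by
      simp only [ne_eq, Matrix.cons_eq_zero_iff, Complex.ofReal_eq_zero, Matrix.zero_empty,
        and_true] at h2 ⊢
      tauto
    refine ⟨_, (ofReal_mk_mem_Z2C_iff h1 h2).2 ⟨?_, by ring⟩, u, _, _, v, u, v, h1, h2, rfl⟩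
    rw [Real.sq_sqrt huv]
    ring

theorem mk_ofReal_eq_nonneg_or_eq_infty {u v : ℝ} (h2 : ![(u : ℂ), (v : ℂ)] ≠ 0)
    (huv : 0 ≤ u * v) :
    (∃ t : ℝ, 0 ≤ t ∧ ∃ h : (![(t : ℂ), 1] : Fin 2 → ℂ) ≠ 0,
        mk ℂ ![(u : ℂ), (v : ℂ)] h2 = mk ℂ ![(t : ℂ), 1] h) ∨
      ∃ h : (![1, 0] : Fin 2 → ℂ) ≠ 0, mk ℂ ![(u : ℂ), (v : ℂ)] h2 = mk ℂ ![1, 0] h := by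
  by_cases hv : v = 0
  · exact .inr ⟨by simp, (mk_fin_two_eq_mk_iff _ _).2 (by simp [hv])⟩
  · refine .inl ⟨u / v, ?_, by simp, (mk_fin_two_eq_mk_iff _ _).2 ?_⟩
    · rw [← mul_div_mul_right u v hv]
      exact div_nonneg huv (mul_self_nonneg v)
    · push_cast
      rw [mul_one, mul_div_cancel₀ _ (by exact_mod_cast hv)]

/-- The image of the set of real points of `Z₂` under the projection
`π : ([w:x:y:z],[u:v]) ↦ [u:v]` is the interval `[0,∞] = {[t:1] : t ≥ 0} ∪ {[1:0]}` of the
real projective line; that is, a real point `[u:v]` of `ℙ¹` is the image of a real point of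
`Z₂` if and only if `uv ≥ 0`. -/
theorem stmt_16 :
    ({r : Projectivization ℂ (Fin 2 → ℂ) | ∃ q, (q, r) ∈ Z2Real} =
      {r | ∃ t : ℝ, 0 ≤ t ∧ ∃ h : (![(t : ℂ), 1] : Fin 2 → ℂ) ≠ 0,
          r = Projectivization.mk ℂ ![(t : ℂ), 1] h} ∪
        {r | ∃ h : (![1, 0] : Fin 2 → ℂ) ≠ 0, r = Projectivization.mk ℂ ![1, 0] h}) ∧
    ∀ (u v : ℝ) (h2 : (![(u : ℂ), (v : ℂ)] : Fin 2 → ℂ) ≠ 0),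
      ((∃ q, (q, Projectivization.mk ℂ ![(u : ℂ), (v : ℂ)] h2) ∈ Z2Real) ↔ 0 ≤ u * v) := by
  refine ⟨Set.ext fun r => ⟨?_, ?_⟩, exists_mem_Z2Real_iff⟩
  · rintro ⟨q, hZ⟩
    obtain ⟨_, _, _, _, u, v, _, h2, hP⟩ := hZ.2
    obtain rfl := (Prod.ext_iff.1 hP).2
    exact mk_ofReal_eq_nonneg_or_eq_infty h2 ((exists_mem_Z2Real_iff u v h2).1 ⟨q, hZ⟩)
  · rintro (⟨t, ht, h, rfl⟩ | ⟨h, rfl⟩)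
    · simpa using (exists_mem_Z2Real_iff t 1 (by simp)).2 (by simpa)
    · simpa using (exists_mem_Z2Real_iff 1 0 (by simp)).2 (by norm_num)
end
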